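/- arXiv:0904.0200 — 4 statements merged into one kernel-verified Lean document; each statement's English description precedes it below -/
import Mathlib

section
/- For all integers m₁ > 0, m₂ < 0 and m₃ ≥ 0, the 4×4 skew-symmetric integer matrix B(1) with rows (0, −m₁, −m₂, −m₃), (m₁, 0, m₁m₂−m₃, −m₂), (m₂, m₃−m₁m₂, 0, −m₁), (m₃, m₂, m₁, 0) has mutation period 2, i.e. μ₂(μ₁(B(1))) = ρ² B(1) ρ⁻²; moreover μ₁(B(1)) equals the matrix B(2) with rows (0, m₁, m₂, m₃), (−m₁, 0, −m₃, −m₂), (−m₂, m₃, 0, m₂m₃−m₁), (−m₃, m₂, m₁−m₂m₃, 0), and B(1) has mutation period 1 (μ₁(B(1)) = ρ B(1) ρ⁻¹) if and only if m₃ = m₁. -/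
open Matrix

/-- The cyclic permutation matrix ρ: ρ_{i+1,i} = 1 (1-based), ρ_{1,N} = 1. -/
def rhoM (N : ℕ) : Matrix (Fin N) (Fin N) ℤ :=
  Matrix.of fun i j => if (i : ℕ) = ((j : ℕ) + 1) % N then 1 else 0

/-- The skew-rotation τ: equal to ρ except τ_{1,N} = −1. -/
def tauM (N : ℕ) : Matrix (Fin N) (Fin N) ℤ :=
  Matrix.of fun i j =>
    if (i : ℕ) = ((j : ℕ) + 1) % N then (if (j : ℕ) + 1 = N then -1 else 1) else 0

/-- Fomin–Zelevinsky matrix mutation at node `k`. -/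
def mutB {N : ℕ} (k : Fin N) (B : Matrix (Fin N) (Fin N) ℤ) : Matrix (Fin N) (Fin N) ℤ :=
  Matrix.of fun i j =>
    if i = k ∨ j = k then -B i j
    else B i j + (|B i k| * B k j + B i k * |B k j|) / 2

/-- Node `k` is a sink of `B` if all entries of column `k` are nonnegative. -/
def IsSink {N : ℕ} (k : Fin N) (B : Matrix (Fin N) (Fin N) ℤ) : Prop :=
  ∀ i, 0 ≤ B i k


/-- The general 4-node period 2 matrix `B(1)`. -/
def B1of (m₁ m₂ m₃ : ℤ) : Matrix (Fin 4) (Fin 4) ℤ :=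
  !![0, -m₁, -m₂, -m₃;
     m₁, 0, m₁ * m₂ - m₃, -m₂;
     m₂, m₃ - m₁ * m₂, 0, -m₁;
     m₃, m₂, m₁, 0]

/-- The matrix `B(2)` of the 4-node period 2 chain. -/
def B2of (m₁ m₂ m₃ : ℤ) : Matrix (Fin 4) (Fin 4) ℤ :=
  !![0, m₁, m₂, m₃;
     -m₁, 0, -m₃, -m₂;
     -m₂, m₃, 0, m₂ * m₃ - m₁;
     -m₃, m₂, m₁ - m₂ * m₃, 0]

/-! Conjugation by the cyclic permutation matrix `ρ` relabels the nodes cyclically, so every claim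
is an identity between explicit matrices. The sign conditions on `m₁, m₂, m₃` fix the signs of the
pivot columns, which turns each entry of a mutation into a polynomial in `m₁, m₂, m₃`. -/

lemma coe_finRotate_eq_add_one_mod {N : ℕ} (j : Fin N) : (finRotate N j : ℕ) = (j + 1) % N := by
  cases N with
  | zero => exact j.elim0
  | succ n => simp [Fin.val_add]

lemma rhoM_eq_permMatrix (N : ℕ) : rhoM N = Equiv.Perm.permMatrix ℤ (finRotate N).symm := by
  ext i j
  simp only [rhoM, of_apply, PEquiv.toMatrix_apply, Equiv.toPEquiv_apply, Option.mem_def,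
    Option.some_inj, Equiv.symm_apply_eq, Fin.ext_iff, coe_finRotate_eq_add_one_mod]

lemma inv_permMatrix {n R : Type*} [Fintype n] [DecidableEq n] [CommRing R]
    (σ : Equiv.Perm n) : (σ.permMatrix R)⁻¹ = σ⁻¹.permMatrix R :=
  inv_eq_right_inv (by rw [← permMatrix_mul, inv_mul_cancel, permMatrix_one])

lemma rhoM_mul_mul_inv {N : ℕ} (B : Matrix (Fin N) (Fin N) ℤ) :
    rhoM N * B * (rhoM N)⁻¹ = B.submatrix (finRotate N).symm (finRotate N).symm := by
  rw [rhoM_eq_permMatrix, inv_permMatrix, PEquiv.toMatrix_toPEquiv_mul,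
    PEquiv.mul_toMatrix_toPEquiv, submatrix_submatrix]
  rfl

lemma rhoM_sq_mul_mul_inv_sq {N : ℕ} (B : Matrix (Fin N) (Fin N) ℤ) :
    rhoM N ^ 2 * B * (rhoM N)⁻¹ ^ 2 =
      B.submatrix (finRotate N ^ 2).symm (finRotate N ^ 2).symm := by
  calc rhoM N ^ 2 * B * (rhoM N)⁻¹ ^ 2 = rhoM N * (rhoM N * B * (rhoM N)⁻¹) * (rhoM N)⁻¹ := by
        simp only [sq, Matrix.mul_assoc]
    _ = _ := by rw [rhoM_mul_mul_inv, rhoM_mul_mul_inv, submatrix_submatrix]; rfl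

lemma coe_finRotate_four_symm : ⇑(finRotate 4).symm = ![3, 0, 1, 2] := by decide

lemma coe_finRotate_four_sq_symm : ⇑(finRotate 4 ^ 2).symm = ![2, 3, 0, 1] := by decide

lemma mutB_zero_B1of {m₁ m₂ m₃ : ℤ} (h₁ : 0 ≤ m₁) (h₂ : m₂ ≤ 0) (h₃ : 0 ≤ m₃) :
    mutB 0 (B1of m₁ m₂ m₃) = B2of m₁ m₂ m₃ := by
  ext i j
  fin_cases i <;> fin_cases j <;>
    simp [mutB, B1of, B2of, abs_of_nonneg h₁, abs_of_nonpos h₂, abs_of_nonneg h₃] <;> grind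

lemma mutB_one_B2of {m₁ m₂ m₃ : ℤ} (h₁ : 0 ≤ m₁) (h₂ : m₂ ≤ 0) (h₃ : 0 ≤ m₃) :
    mutB 1 (B2of m₁ m₂ m₃) =
      (B1of m₁ m₂ m₃).submatrix (finRotate 4 ^ 2).symm (finRotate 4 ^ 2).symm := by
  rw [coe_finRotate_four_sq_symm]
  ext i j
  fin_cases i <;> fin_cases j <;>
    simp [mutB, B1of, B2of, abs_of_nonneg h₁, abs_of_nonpos h₂, abs_of_nonneg h₃] <;> grind

lemma B2of_eq_submatrix_finRotate_B1of_iff (m₁ m₂ m₃ : ℤ) :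
    B2of m₁ m₂ m₃ = (B1of m₁ m₂ m₃).submatrix (finRotate 4).symm (finRotate 4).symm ↔
      m₃ = m₁ := by
  rw [coe_finRotate_four_symm]
  constructor
  · intro h
    exact (congrFun₂ h 0 1).symm
  · rintro rfl
    ext i j
    fin_cases i <;> fin_cases j <;> simp [B1of, B2of] <;> ring

/-- For `m₁ > 0`, `m₂ < 0`, `m₃ ≥ 0`, the matrix `B(1)` has mutation period 2, with
`μ₁(B(1)) = B(2)`, and it has mutation period 1 iff `m₃ = m₁`. -/
theorem stmt16 (m₁ m₂ m₃ : ℤ) (h1 : 0 < m₁) (h2 : m₂ < 0) (h3 : 0 ≤ m₃) :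
    mutB 1 (mutB 0 (B1of m₁ m₂ m₃)) = rhoM 4 ^ 2 * B1of m₁ m₂ m₃ * ((rhoM 4)⁻¹) ^ 2 ∧
    mutB 0 (B1of m₁ m₂ m₃) = B2of m₁ m₂ m₃ ∧
    (mutB 0 (B1of m₁ m₂ m₃) = rhoM 4 * B1of m₁ m₂ m₃ * (rhoM 4)⁻¹ ↔ m₃ = m₁) := by
  rw [rhoM_sq_mul_mul_inv_sq, rhoM_mul_mul_inv, mutB_zero_B1of h1.le h2.le h3]
  exact ⟨mutB_one_B2of h1.le h2.le h3, rfl, B2of_eq_submatrix_finRotate_B1of_iff m₁ m₂ m₃⟩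
end

section
/- Let N = 2r−1 ≥ 3 be odd and let (x_n)_{n≥1} be a sequence of rational numbers with x_i = 1 for 1 ≤ i ≤ N and x_n x_{n+N} = x_{n+1} x_{n+N−1} + 1 for all n ≥ 1. Fix t with 1 ≤ t ≤ N−1 and for m ≥ 0 set a_m := x_{(N−1)m+r} and b_m := x_{(N−1)m+t+1} − x_{(N−1)m+t}. Then the pairs (a_m, b_m) for m > 0 are precisely the positive integer solutions of the Pell equation a² − (r²−1)b² = 1: for every m > 0, a_m and b_m are positive integers with a_m² − (r²−1)b_m² = 1, and conversely every pair (a, b) of positive integers with a² − (r²−1)b² = 1 equals (a_m, b_m) for some m > 0. -/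
private def pell (r : ℤ) : ℕ → ℤ × ℤ
  | 0 => (1, 0)
  | m + 1 => (r * (pell r m).1 + (r ^ 2 - 1) * (pell r m).2,
              (pell r m).1 + r * (pell r m).2)

private lemma pell_eq (r : ℤ) : ∀ m, (pell r m).1 ^ 2 - (r ^ 2 - 1) * (pell r m).2 ^ 2 = 1
  | 0 => by simp [pell]
  | m + 1 => by
    have ih := pell_eq r m
    simp only [pell]
    linear_combination ih

private lemma pell_pos (r : ℤ) (hr : 2 ≤ r) : ∀ m, 1 ≤ (pell r m).1 ∧ 0 ≤ (pell r m).2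
  | 0 => by simp [pell]
  | m + 1 => by
    obtain ⟨h1, h2⟩ := pell_pos r hr m
    have hD : (0:ℤ) ≤ r ^ 2 - 1 := by nlinarith
    constructor <;> simp only [pell]
    · nlinarith [mul_nonneg hD h2, mul_pos (by linarith : (0:ℤ) < r)
        (by linarith : (0:ℤ) < (pell r m).1)]
    · nlinarith [mul_nonneg (by linarith : (0:ℤ) ≤ r) h2]

private lemma pell_B_pos (r : ℤ) (hr : 2 ≤ r) (m : ℕ) (hm : 0 < m) : 0 < (pell r m).2 := by
  obtain ⟨k, rfl⟩ := Nat.exists_eq_succ_of_ne_zero hm.ne'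
  obtain ⟨h1, h2⟩ := pell_pos r hr k
  simp only [pell]
  nlinarith [mul_nonneg (by linarith : (0:ℤ) ≤ r) h2]

private lemma pell_lin_pos (r : ℤ) (hr : 2 ≤ r) (m : ℕ) (c : ℤ) (hc1 : 1 - r ≤ c)
    (hc2 : c ≤ r - 1) : 0 < (pell r m).1 + c * (pell r m).2 := by
  obtain ⟨h1, h2⟩ := pell_pos r hr m
  have heq := pell_eq r m
  have hB1 : 0 ≤ (r - 1) * (pell r m).2 := mul_nonneg (by linarith) h2
  have h4 : 0 < (pell r m).1 + (r - 1) * (pell r m).2 := by linarith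
  have h5 : 0 < (pell r m).1 - (r - 1) * (pell r m).2 := by
    by_contra h
    push_neg at h
    nlinarith [mul_nonneg h4.le (by linarith : 0 ≤ (r - 1) * (pell r m).2 - (pell r m).1),
      sq_nonneg ((pell r m).2)]
  nlinarith [mul_nonneg (by linarith : (0:ℤ) ≤ c - (1 - r)) h2]

private lemma pell_surj (r : ℤ) (hr : 2 ≤ r) (b : ℤ) (hb : 0 ≤ b) (a : ℤ) (ha : 0 < a)
    (heq : a ^ 2 - (r ^ 2 - 1) * b ^ 2 = 1) :
    ∃ m, a = (pell r m).1 ∧ b = (pell r m).2 := by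
  suffices h : ∀ n : ℕ, ∀ b : ℤ, b.toNat ≤ n → 0 ≤ b → ∀ a : ℤ, 0 < a →
      a ^ 2 - (r ^ 2 - 1) * b ^ 2 = 1 → ∃ m, a = (pell r m).1 ∧ b = (pell r m).2 by
    exact h b.toNat b le_rfl hb a ha heq
  intro n
  induction n with
  | zero =>
    intro b hbn hb a ha heq
    have hb0 : b = 0 := by omega
    subst hb0
    have h1 : a ≤ 1 := by nlinarith [sq_nonneg (a - 1)]
    have : a = 1 := le_antisymm h1 ha
    exact ⟨0, by simp [pell, this]⟩
  | succ n ih =>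
    intro b hbn hb a ha heq
    rcases eq_or_lt_of_le hb with h0 | h0
    · have hb0 : b = 0 := h0.symm
      subst hb0
      have h1 : a ≤ 1 := by nlinarith [sq_nonneg (a - 1)]
      have : a = 1 := le_antisymm h1 ha
      exact ⟨0, by simp [pell, this]⟩
    · have hrb : 0 < r * b := mul_pos (by linarith) h0
      have hab : a ≤ r * b := by
        by_contra h
        push_neg at h
        have h2 : 0 ≤ (a - (r * b + 1)) * (a + (r * b + 1)) :=
          mul_nonneg (by linarith) (by linarith)
        nlinarith [h2, mul_pos h0 h0, mul_pos (by linarith : (0:ℤ) < r) h0]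
      have hab2 : (r - 1) * b < a := by
        by_contra h
        push_neg at h
        have h2 : a * a ≤ ((r - 1) * b) * ((r - 1) * b) :=
          mul_le_mul h h ha.le (by linarith)
        nlinarith [h2, mul_pos h0 h0]
      have ha' : 0 < r * a - (r ^ 2 - 1) * b := by
        by_contra h
        push_neg at h
        have hra : 0 < r * a := mul_pos (by linarith) ha
        have h' : r * a ≤ (r ^ 2 - 1) * b := by linarith
        have h2 : (r * a) * (r * a) ≤ ((r ^ 2 - 1) * b) * ((r ^ 2 - 1) * b) :=
          mul_le_mul h' h' hra.le (le_trans hra.le h')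
        nlinarith [h2, mul_nonneg (by nlinarith : (0:ℤ) ≤ r ^ 2 - 1) (sq_nonneg b),
          mul_pos h0 h0]
      have hb'0 : 0 ≤ r * b - a := by linarith
      have hb'lt : r * b - a < b := by linarith
      have heq' : (r * a - (r ^ 2 - 1) * b) ^ 2 - (r ^ 2 - 1) * (r * b - a) ^ 2 = 1 := by
        linear_combination heq
      obtain ⟨m, hA, hB⟩ := ih (r * b - a) (by omega) hb'0 _ ha' heq'
      refine ⟨m + 1, ?_, ?_⟩ <;> simp only [pell, ← hA, ← hB] <;> ring

/-- Pell's equation from the primitive `P_N^(1)`, odd case `N = 2r−1`: the pairs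
`(a_m, b_m) = (x_{(N−1)m+r}, x_{(N−1)m+t+1} − x_{(N−1)m+t})` for `m > 0` are exactly
the positive integer solutions of `a² − (r²−1)b² = 1`. -/
theorem stmt17 (N r : ℕ) (hr : 2 ≤ r) (hN : N = 2 * r - 1)
    (x : ℕ → ℚ) (hinit : ∀ i, 1 ≤ i → i ≤ N → x i = 1)
    (hrec : ∀ n, 1 ≤ n → x n * x (n + N) = x (n + 1) * x (n + N - 1) + 1)
    (t : ℕ) (ht1 : 1 ≤ t) (ht2 : t ≤ N - 1) :
    (∀ m : ℕ, 0 < m → ∃ a b : ℤ, 0 < a ∧ 0 < b ∧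
      (a : ℚ) = x ((N - 1) * m + r) ∧
      (b : ℚ) = x ((N - 1) * m + t + 1) - x ((N - 1) * m + t) ∧
      a ^ 2 - ((r : ℤ) ^ 2 - 1) * b ^ 2 = 1) ∧
    (∀ a b : ℤ, 0 < a → 0 < b → a ^ 2 - ((r : ℤ) ^ 2 - 1) * b ^ 2 = 1 →
      ∃ m : ℕ, 0 < m ∧ (a : ℚ) = x ((N - 1) * m + r) ∧
        (b : ℚ) = x ((N - 1) * m + t + 1) - x ((N - 1) * m + t)) := by
  have hr' : (2 : ℤ) ≤ (r : ℤ) := by exact_mod_cast hr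
  have hN3 : 3 ≤ N := by omega
  have hNQ : (N : ℚ) = 2 * (r : ℚ) - 1 := by
    have h : (N : ℕ) + 1 = 2 * r := by omega
    have := congrArg (fun n : ℕ => (n : ℚ)) h
    push_cast at this
    linarith
  -- positivity of the closed form values, in ℚ
  have hposQ : ∀ m : ℕ, ∀ k : ℕ, 1 ≤ k → k ≤ N →
      (0 : ℚ) < ((pell r m).1 : ℚ) + ((k : ℚ) - r) * ((pell r m).2 : ℚ) := by
    intro m k hk1 hk2
    have hc1 : 1 - (r : ℤ) ≤ (k : ℤ) - r := by
      have : 1 ≤ (k : ℤ) := by exact_mod_cast hk1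
      linarith
    have hc2 : (k : ℤ) - r ≤ (r : ℤ) - 1 := by
      have : (k : ℤ) ≤ (N : ℤ) := by exact_mod_cast hk2
      have hNZ : (N : ℤ) = 2 * r - 1 := by
        have h : (N : ℕ) + 1 = 2 * r := by omega
        omega
      omega
    have := pell_lin_pos (r : ℤ) hr' m ((k : ℤ) - r) hc1 hc2
    have h2 : (0 : ℚ) < (((pell r m).1 + ((k : ℤ) - r) * (pell r m).2 : ℤ) : ℚ) := by
      exact_mod_cast this
    push_cast at h2
    linarith
  -- Pell equation in ℚ
  have hpellQ : ∀ m : ℕ, ((pell r m).1 : ℚ) ^ 2 - ((r : ℚ) ^ 2 - 1) * ((pell r m).2 : ℚ) ^ 2 = 1 := by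
    intro m
    have := pell_eq (r : ℤ) m
    have h2 := congrArg (fun z : ℤ => (z : ℚ)) this
    push_cast at h2
    linarith
  -- the closed form
  have key : ∀ m : ℕ, ∀ j : ℕ, 1 ≤ j → j ≤ N →
      x ((N - 1) * m + j) = ((pell r m).1 : ℚ) + ((j : ℚ) - r) * ((pell r m).2 : ℚ) := by
    intro m
    induction m with
    | zero =>
      intro j h1 h2
      simpa [pell] using hinit j h1 h2
    | succ m ih =>
      intro j
      induction j with
      | zero => intro h1 _; omega
      | succ j ihj =>
        intro h1 h2
        rcases Nat.eq_zero_or_pos j with hj0 | hj1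
        · subst hj0
          have hidx : (N - 1) * (m + 1) + 1 = (N - 1) * m + N := by
            rw [Nat.mul_succ]; omega
          rw [hidx, ih N (by omega) le_rfl]
          simp only [pell]
          push_cast
          linear_combination ((pell (r : ℤ) m).2 : ℚ) * hNQ
        · -- j ≥ 1, use the recurrence at n = (N-1)*m + j
          have hn1 : 1 ≤ (N - 1) * m + j := by omega
          have hrec' := hrec ((N - 1) * m + j) hn1
          have e1 : (N - 1) * m + j + N = (N - 1) * (m + 1) + (j + 1) := by
            rw [Nat.mul_succ]; omega
          have e2 : (N - 1) * m + j + N - 1 = (N - 1) * (m + 1) + j := by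
            rw [Nat.mul_succ]; omega
          have e3 : (N - 1) * m + j + 1 = (N - 1) * m + (j + 1) := by omega
          rw [e2, e1, e3] at hrec'
          rw [ih j hj1 (by omega), ih (j + 1) (by omega) h2, ihj hj1 (by omega)] at hrec'
          have hne : ((pell r m).1 : ℚ) + ((j : ℚ) - r) * ((pell r m).2 : ℚ) ≠ 0 :=
            ne_of_gt (hposQ m j hj1 (by omega))
          have hident : (((pell r m).1 : ℚ) + ((j : ℚ) - r) * ((pell r m).2 : ℚ)) *
              (((pell r (m+1)).1 : ℚ) + (((j + 1 : ℕ) : ℚ) - r) * ((pell r (m+1)).2 : ℚ)) =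
              (((pell r m).1 : ℚ) + (((j + 1 : ℕ) : ℚ) - r) * ((pell r m).2 : ℚ)) *
              (((pell r (m+1)).1 : ℚ) + ((j : ℚ) - r) * ((pell r (m+1)).2 : ℚ)) + 1 := by
            simp only [pell]
            push_cast
            linear_combination hpellQ m
          exact mul_left_cancel₀ hne (hrec'.trans hident.symm)
  constructor
  · intro m hm
    refine ⟨(pell r m).1, (pell r m).2, by exact_mod_cast (pell_pos (r:ℤ) hr' m).1,
      pell_B_pos (r : ℤ) hr' m hm, ?_, ?_, pell_eq (r : ℤ) m⟩
    · rw [key m r (by omega) (by omega)]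
      push_cast
      ring
    · have et : (N - 1) * m + t + 1 = (N - 1) * m + (t + 1) := by omega
      rw [et, key m t ht1 (by omega), key m (t + 1) (by omega) (by omega)]
      push_cast
      ring
  · intro a b ha hb heq
    obtain ⟨m, hA, hB⟩ := pell_surj (r : ℤ) hr' b hb.le a ha heq
    have hm : 0 < m := by
      rcases Nat.eq_zero_or_pos m with h | h
      · subst h; simp [pell] at hB; omega
      · exact h
    refine ⟨m, hm, ?_, ?_⟩
    · rw [key m r (by omega) (by omega), hA]
      push_cast
      ring
    · have et : (N - 1) * m + t + 1 = (N - 1) * m + (t + 1) := by omega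
      rw [et, key m t ht1 (by omega), key m (t + 1) (by omega) (by omega), hB]
      push_cast
      ring
end

section
/- Let N = 2r ≥ 2 be even and let (x_n)_{n≥1} be a sequence of rational numbers with x_i = 1 for 1 ≤ i ≤ N and x_n x_{n+N} = x_{n+1} x_{n+N−1} + 1 for all n ≥ 1. Fix t, t′ with 1 ≤ t ≤ r and 1 ≤ t′ ≤ N−1, and for m ≥ 0 set a_m := x_{(N−1)m+t} + x_{(N−1)m+N+1−t} and b_m := x_{(N−1)m+t′+1} − x_{(N−1)m+t′}. Then the pairs (a_m, b_m) for m > 0 are precisely the positive integer solutions of the Pell-like equation a² − ((2r+1)² − 4)b² = 4: for every m > 0, a_m and b_m are positive integers with a_m² − ((2r+1)² − 4)b_m² = 4, and conversely every pair (a, b) of positive integers with a² − ((2r+1)² − 4)b² = 4 equals (a_m, b_m) for some m > 0. -/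
/-- Chebyshev-like sequence: `D 0 = 0`, `D 1 = 1`, `D (m+2) = k D(m+1) - D m`. -/
def pellD (k : ℤ) : ℕ → ℤ
  | 0 => 0
  | 1 => 1
  | (m+2) => k * pellD k (m+1) - pellD k m

/-- Companion sequence: `C 0 = 1`, `C 1 = 1`, same recurrence. -/
def pellC (k : ℤ) : ℕ → ℤ
  | 0 => 1
  | 1 => 1
  | (m+2) => k * pellC k (m+1) - pellC k m

lemma pellD_two (k : ℤ) (m : ℕ) : pellD k (m+2) = k * pellD k (m+1) - pellD k m := rfl
lemma pellC_two (k : ℤ) (m : ℕ) : pellC k (m+2) = k * pellC k (m+1) - pellC k m := rfl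

lemma pellD_mono (k : ℤ) (hk : 3 ≤ k) : ∀ m, 0 ≤ pellD k m ∧ pellD k m < pellD k (m+1) := by
  intro m
  induction m with
  | zero => simp [pellD]
  | succ n ih =>
    refine ⟨by linarith [ih.1, ih.2], ?_⟩
    rw [pellD_two]
    nlinarith [ih.1, ih.2]

lemma pellD_one_le (k : ℤ) (hk : 3 ≤ k) (m : ℕ) : 1 ≤ pellD k (m+1) := by
  have h0 := pellD_mono k hk m
  have : pellD k 0 = 0 := rfl
  induction m with
  | zero => simp [pellD]
  | succ n ih =>
    have h1 := pellD_mono k hk (n+1)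
    have h2 := pellD_mono k hk n
    linarith [ih h2]

lemma pellC_pos (k : ℤ) (hk : 3 ≤ k) : ∀ m, 1 ≤ pellC k m ∧ pellC k m ≤ pellC k (m+1) := by
  intro m
  induction m with
  | zero => simp [pellC]
  | succ n ih =>
    refine ⟨by linarith [ih.1, ih.2], ?_⟩
    rw [pellC_two]
    nlinarith [ih.1, ih.2]

lemma pellCD (k : ℤ) : ∀ m, pellC k (m+1) = pellD k (m+1) - pellD k m := by
  have key : ∀ m, pellC k (m+1) = pellD k (m+1) - pellD k m ∧
      pellC k (m+2) = pellD k (m+2) - pellD k (m+1) := by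
    intro m
    induction m with
    | zero => refine ⟨by simp [pellC, pellD], ?_⟩; rw [pellC_two, pellD_two]; simp [pellC, pellD]
    | succ n ih =>
      refine ⟨ih.2, ?_⟩
      have e3 := pellD_two k n
      rw [pellC_two, pellD_two]
      linear_combination k * ih.2 - ih.1 + e3
  exact fun m => (key m).1

lemma pellCstep (k : ℤ) (m : ℕ) : pellC k (m+1) = pellC k m + (k - 2) * pellD k m := by
  cases m with
  | zero => simp [pellC, pellD]
  | succ n =>
    have h1 := pellCD k n
    have h2 := pellCD k (n+1)
    rw [pellD_two] at h2
    linarith [h1, h2]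

lemma pellWr (k : ℤ) : ∀ m, pellC k m * pellD k (m+1) - pellC k (m+1) * pellD k m = 1 := by
  intro m
  induction m with
  | zero => simp [pellC, pellD]
  | succ n ih =>
    rw [pellC_two, pellD_two]
    linear_combination ih

lemma pellE (k : ℤ) : ∀ m, pellD k (m+1)^2 + pellD k m^2 - k * pellD k (m+1) * pellD k m = 1 := by
  intro m
  induction m with
  | zero => simp [pellD]
  | succ n ih =>
    rw [pellD_two]
    linear_combination ih

lemma pell_descent_aux (r : ℕ) (hr : 1 ≤ r) :
    ∀ n : ℕ, ∀ a b : ℤ, b ≤ (n : ℤ) → 0 < a → 0 < b →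
      a ^ 2 - ((2 * (r : ℤ) + 1) ^ 2 - 4) * b ^ 2 = 4 →
      ∃ m : ℕ, a = (2 * (r : ℤ) + 1) * pellD (2 * (r : ℤ) + 1) (m + 1)
            - 2 * pellD (2 * (r : ℤ) + 1) m
          ∧ b = pellD (2 * (r : ℤ) + 1) (m + 1) := by
  set k : ℤ := 2 * (r : ℤ) + 1 with hkdef
  have hk : 3 ≤ k := by rw [hkdef]; omega
  intro n
  induction n with
  | zero => intro a b hle ha hb _; exfalso; omega
  | succ n ih =>
    intro a b hle ha hb hp
    by_cases hb1 : b = 1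
    · subst hb1
      have h2 : (a - k) * (a + k) = 0 := by linear_combination hp
      rcases mul_eq_zero.mp h2 with h | h
      · refine ⟨0, ?_, ?_⟩ <;> simp [pellD] <;> linarith
      · exfalso; linarith
    · have hb2 : 2 ≤ b := by omega
      -- parity: a ≡ b (mod 2)
      have hev : Even (a - b) := by
        have h1 : Even (a ^ 2 - b ^ 2) :=
          ⟨(2 * (r : ℤ) ^ 2 + 2 * r - 2) * b ^ 2 + 2, by rw [hkdef] at hp; push_cast at hp ⊢; linarith⟩
        have h2 : (Even (a ^ 2) ↔ Even (b ^ 2)) := (Int.even_sub).mp h1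
        have h3 : Even a ↔ Even b := by
          rw [Int.even_pow, Int.even_pow] at h2
          constructor
          · intro h; exact ((h2.mp ⟨h, by norm_num⟩)).1
          · intro h; exact ((h2.mpr ⟨h, by norm_num⟩)).1
        exact (Int.even_sub).mpr h3
      obtain ⟨c, hc⟩ := hev
      set a' : ℤ := (r : ℤ) * a + c - (2 * (r : ℤ) ^ 2 + 2 * r - 2) * b with ha'def
      set b' : ℤ := (r : ℤ) * b - c with hb'def
      have h2a : 2 * a' = k * a - (k ^ 2 - 4) * b := by
        rw [ha'def, hkdef]; push_cast; linear_combination (-1 : ℤ) * hc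
      have h2b : 2 * b' = k * b - a := by
        rw [hb'def, hkdef]; push_cast; linear_combination hc
      have hb'pos : 0 < b' := by
        have hab : a < k * b := by
          by_contra h
          push_neg at h
          have h1 : (k * b) ^ 2 ≤ a ^ 2 := pow_le_pow_left₀ (by positivity) h 2
          nlinarith [hp, h1, hb2]
        linarith [h2b]
      have hb'lt : b' < b := by
        have hab : (k - 2) * b < a := by
          by_contra h
          push_neg at h
          have h1 : a ^ 2 ≤ ((k - 2) * b) ^ 2 := pow_le_pow_left₀ ha.le h 2
          nlinarith [hp, h1, hb2, hk, mul_pos hb hb]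
        linarith [h2b]
      have ha'pos : 0 < a' := by
        have hab : (k ^ 2 - 4) * b < k * a := by
          by_contra h
          push_neg at h
          have h1 : (k * a) ^ 2 ≤ ((k ^ 2 - 4) * b) ^ 2 :=
            pow_le_pow_left₀ (by positivity) h 2
          have h2 : k ^ 2 * a ^ 2 - k ^ 2 * (k ^ 2 - 4) * b ^ 2 = 4 * k ^ 2 := by
            linear_combination k ^ 2 * hp
          nlinarith [h1, h2, hk, mul_pos hb hb,
            mul_nonneg (by nlinarith [hk] : (0:ℤ) ≤ k ^ 2 - 4) (sq_nonneg b)]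
        linarith [h2a]
      have hp' : a' ^ 2 - (k ^ 2 - 4) * b' ^ 2 = 4 := by
        have h16 : (2 * a') ^ 2 - (k ^ 2 - 4) * (2 * b') ^ 2 = 16 := by
          rw [h2a, h2b]; linear_combination 4 * hp
        linarith [h16]
      have hle' : b' ≤ (n : ℤ) := by omega
      obtain ⟨m, hm1, hm2⟩ := ih a' b' hle' ha'pos hb'pos hp'
      have e : pellD k (m + 2) = k * pellD k (m + 1) - pellD k m := pellD_two k m
      have h4 : 4 * a = 2 * k * a' + 2 * (k ^ 2 - 4) * b' := by
        linear_combination (-k) * h2a - (k ^ 2 - 4) * h2b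
      have h6 : 4 * b = 2 * a' + 2 * k * b' := by
        linear_combination (-1 : ℤ) * h2a - k * h2b
      rw [hm1, hm2] at h4 h6
      refine ⟨m + 1, ?_, ?_⟩
      · rw [show m + 1 + 1 = m + 2 from rfl, e]; linarith [h4]
      · rw [show m + 1 + 1 = m + 2 from rfl, e]; linarith [h6]

lemma pell_descent (r : ℕ) (hr : 1 ≤ r) (a b : ℤ) (ha : 0 < a) (hb : 0 < b)
    (hp : a ^ 2 - ((2 * (r : ℤ) + 1) ^ 2 - 4) * b ^ 2 = 4) :
    ∃ m : ℕ, a = (2 * (r : ℤ) + 1) * pellD (2 * (r : ℤ) + 1) (m + 1)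
          - 2 * pellD (2 * (r : ℤ) + 1) m
        ∧ b = pellD (2 * (r : ℤ) + 1) (m + 1) :=
  pell_descent_aux r hr b.toNat a b (by omega) ha hb hp

/-- Pell's equation from the primitive `P_N^(1)`, even case `N = 2r`: the pairs
`(a_m, b_m) = (x_{(N−1)m+t} + x_{(N−1)m+N+1−t}, x_{(N−1)m+t′+1} − x_{(N−1)m+t′})`
for `m > 0` are exactly the positive integer solutions of
`a² − ((2r+1)² − 4)b² = 4`. -/
theorem stmt18 (N r : ℕ) (hr : 1 ≤ r) (hN : N = 2 * r)
    (x : ℕ → ℚ) (hinit : ∀ i, 1 ≤ i → i ≤ N → x i = 1)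
    (hrec : ∀ n, 1 ≤ n → x n * x (n + N) = x (n + 1) * x (n + N - 1) + 1)
    (t t' : ℕ) (ht1 : 1 ≤ t) (ht2 : t ≤ r) (ht'1 : 1 ≤ t') (ht'2 : t' ≤ N - 1) :
    (∀ m : ℕ, 0 < m → ∃ a b : ℤ, 0 < a ∧ 0 < b ∧
      (a : ℚ) = x ((N - 1) * m + t) + x ((N - 1) * m + N + 1 - t) ∧
      (b : ℚ) = x ((N - 1) * m + t' + 1) - x ((N - 1) * m + t') ∧
      a ^ 2 - ((2 * (r : ℤ) + 1) ^ 2 - 4) * b ^ 2 = 4) ∧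
    (∀ a b : ℤ, 0 < a → 0 < b → a ^ 2 - ((2 * (r : ℤ) + 1) ^ 2 - 4) * b ^ 2 = 4 →
      ∃ m : ℕ, 0 < m ∧ (a : ℚ) = x ((N - 1) * m + t) + x ((N - 1) * m + N + 1 - t) ∧
        (b : ℚ) = x ((N - 1) * m + t' + 1) - x ((N - 1) * m + t')) := by
  set k : ℤ := 2 * (r : ℤ) + 1 with hkdef
  have hk : 3 ≤ k := by rw [hkdef]; omega
  have hN2 : 2 ≤ N := by omega
  have hNq : (N : ℚ) = 2 * (r : ℚ) := by exact_mod_cast congrArg (Nat.cast (R := ℚ)) hN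
  -- the closed formula for x along blocks of length N-1
  have claimX : ∀ m s, 1 ≤ s → s ≤ N →
      x ((N - 1) * m + s) = (pellC k m : ℚ) + ((s : ℚ) - 1) * (pellD k m : ℚ) := by
    intro m
    induction m with
    | zero =>
      intro s h1 h2
      rw [Nat.mul_zero, Nat.zero_add, hinit s h1 h2]
      simp [pellC, pellD]
    | succ m ih =>
      intro s hs1
      induction s, hs1 using Nat.le_induction with
      | base =>
        intro _
        have hidx : (N - 1) * (m + 1) + 1 = (N - 1) * m + N := by rw [Nat.mul_succ]; omega
        rw [hidx, ih N (by omega) le_rfl]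
        have hCs : (pellC k (m + 1) : ℚ) =
            (pellC k m : ℚ) + (2 * (r : ℚ) - 1) * (pellD k m : ℚ) := by
          have h := pellCstep k m
          rw [hkdef] at h
          have h2 : pellC k (m + 1) = pellC k m + (2 * (r : ℤ) - 1) * pellD k m := by
            rw [h]; ring
          exact_mod_cast h2
        rw [hNq, hCs]; push_cast; ring
      | succ n hn ihn =>
        intro hn1N
        have hrecn := hrec ((N - 1) * m + n)
          (le_trans hn (Nat.le_add_left n _))
        have i1 : (N - 1) * m + n + N = (N - 1) * (m + 1) + (n + 1) := by
          rw [Nat.mul_succ]; omega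
        have i2 : (N - 1) * m + n + N - 1 = (N - 1) * (m + 1) + n := by
          rw [Nat.mul_succ]; omega
        rw [i2, i1] at hrecn
        have hxA := ih n hn (by omega)
        have hxB := ih (n + 1) (by omega) hn1N
        have hxC := ihn (by omega)
        have hW : (pellC k m : ℚ) * (pellD k (m + 1) : ℚ)
            - (pellC k (m + 1) : ℚ) * (pellD k m : ℚ) = 1 := by
          exact_mod_cast pellWr k m
        have hCpos : (1 : ℚ) ≤ (pellC k m : ℚ) := by exact_mod_cast (pellC_pos k hk m).1
        have hDpos : (0 : ℚ) ≤ (pellD k m : ℚ) := by exact_mod_cast (pellD_mono k hk m).1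
        have hnq : (1 : ℚ) ≤ (n : ℚ) := by exact_mod_cast hn
        have hxne : x ((N - 1) * m + n) ≠ 0 := by
          rw [hxA]; nlinarith
        have key : x ((N - 1) * m + n) * x ((N - 1) * (m + 1) + (n + 1)) =
            x ((N - 1) * m + n) *
              ((pellC k (m + 1) : ℚ) + (((n + 1 : ℕ) : ℚ) - 1) * (pellD k (m + 1) : ℚ)) := by
          rw [hrecn, show (N - 1) * m + n + 1 = (N - 1) * m + (n + 1) from rfl, hxA, hxB, hxC]
          push_cast
          linear_combination -hW
        exact mul_left_cancel₀ hxne key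
  -- the two basic expressions
  have hbexp : ∀ m, x ((N - 1) * m + t' + 1) - x ((N - 1) * m + t') = (pellD k m : ℚ) := by
    intro m
    have h1 := claimX m (t' + 1) (by omega) (by omega)
    have h2 := claimX m t' ht'1 (by omega)
    rw [show (N - 1) * m + t' + 1 = (N - 1) * m + (t' + 1) from rfl, h1, h2]
    push_cast; ring
  have haexp : ∀ m, x ((N - 1) * m + t) + x ((N - 1) * m + N + 1 - t) =
      2 * (pellC k m : ℚ) + (2 * (r : ℚ) - 1) * (pellD k m : ℚ) := by
    intro m
    have hidx : (N - 1) * m + N + 1 - t = (N - 1) * m + (N + 1 - t) := by omega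
    have h1 := claimX m t ht1 (by omega)
    have h2 := claimX m (N + 1 - t) (by omega) (by omega)
    rw [hidx, h1, h2]
    have hc : ((N + 1 - t : ℕ) : ℚ) = (N : ℚ) + 1 - (t : ℚ) := by
      have ht : t ≤ N + 1 := by omega
      push_cast [ht]
      ring
    rw [hc, hNq]; ring
  constructor
  · -- forward direction
    intro m hm
    obtain ⟨j, rfl⟩ : ∃ j, m = j + 1 := ⟨m - 1, by omega⟩
    refine ⟨2 * pellC k (j + 1) + (2 * (r : ℤ) - 1) * pellD k (j + 1),
      pellD k (j + 1), ?_, ?_, ?_, ?_, ?_⟩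
    · have h1 := (pellC_pos k hk (j + 1)).1
      have h2 := (pellD_mono k hk (j + 1)).1
      have h3 : (1 : ℤ) ≤ (r : ℤ) := by exact_mod_cast hr
      nlinarith
    · exact lt_of_lt_of_le one_pos (pellD_one_le k hk j)
    · rw [haexp (j + 1)]; push_cast; ring
    · rw [hbexp (j + 1)]
    · rw [pellCD k j]
      have hE := pellE k j
      rw [hkdef] at hE ⊢
      linear_combination 4 * hE
  · -- converse direction
    intro a b ha hb hp
    obtain ⟨m, hm1, hm2⟩ := pell_descent r hr a b ha hb (by rw [hkdef] at hp; exact hp)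
    have hCDm := pellCD k m
    have haz : a = 2 * pellC k (m + 1) + (2 * (r : ℤ) - 1) * pellD k (m + 1) := by
      rw [hCDm]
      rw [← hkdef] at hm1
      linear_combination hm1 + pellD k (m + 1) * hkdef
    refine ⟨m + 1, Nat.succ_pos m, ?_, ?_⟩
    · rw [haexp (m + 1)]; exact_mod_cast haz
    · rw [hbexp (m + 1)]; exact_mod_cast hm2
end

section
/- Let R be a commutative ring and let (c_n)_{n≥1} be a sequence in R. Define a sequence (a_n)_{n≥0} in R by a₀ = 0, a₁ = 1 and a_n = −a_{n−2} − c_{n−1} a_{n−1} for n ≥ 2. For n ≥ 1 and 1 ≤ k ≤ n, let t^{n}_{k,odd} denote the sum, over all sequences 1 ≤ i₁ < i₂ < ⋯ < i_k ≤ n with i₁ odd, i₂ even, i₃ odd, and so on alternating, of the products c_{i₁} c_{i₂} ⋯ c_{i_k}, with t^{n}_{0,odd} := 1. Then for every r ≥ 1: (a) a_{2r} = (−1)^r Σ_{k=0}^{r−1} (−1)^k t^{(2r−1)}_{2k+1,odd}, and (b) a_{2r−1} = (−1)^{r−1} Σ_{k=0}^{r−1} (−1)^k t^{(2r−2)}_{2k,odd}.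 -/
/-
Splitting off the largest index `n + 1` gives
`t^{n+1}_{k+1} = t^n_{k+1} + [n ≡ k mod 2] c_{n+1} t^n_k`, because an alternating index sequence
starting at an odd index ends at an index of the parity of its length. Applied twice, this gives
`t^{n+2}_{j+1} = t^n_{j+1} + c_{n+2} t^{n+1}_j` whenever `n + j` is odd. Hence the alternating
sums `P_m = Σ_k (-1)^k t^{2m}_{2k}` and `Q_m = Σ_k (-1)^k t^{2m+1}_{2k+1}` (`altSumEven`,
`altSumOdd`) satisfy `P_{m+1} = P_m - c_{2m+2} Q_m` and `Q_{m+1} = Q_m + c_{2m+3} P_{m+1}`, which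
is the recurrence of `a` for `a_{2m+1} = (-1)^m P_m` and `a_{2m+2} = (-1)^{m+1} Q_m`.
-/

open Finset

/-- `t^n_{k,odd}` for a sequence `c`: the sum, over all strictly increasing sequences
`1 ≤ i₁ < ⋯ < i_k ≤ n` with `i₁` odd, `i₂` even, `i₃` odd, and so on alternating,
of `c_{i₁} ⋯ c_{i_k}`, with `t^n_{0,odd} := 1`. -/
def oddAltSum {R : Type*} [CommRing R] (c : ℕ → R) (n k : ℕ) : R :=
  if k = 0 then 1
  else ∑ s ∈ (Finset.powersetCard k (Finset.Icc 1 n)).filter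
      (fun s => ((s.sort (· ≤ ·)).IsChain fun a b => (a + b) % 2 = 1) ∧
        ∀ h ∈ (s.sort (· ≤ ·)).head?, h % 2 = 1),
    ∏ i ∈ s, c i

def AltParity (p : ℕ) (l : List ℕ) : Prop :=
  l.IsChain (fun a b => (a + b) % 2 = 1) ∧ ∀ h ∈ l.head?, h % 2 = p % 2

instance (p : ℕ) : DecidablePred (AltParity p) := fun _ =>
  inferInstanceAs (Decidable (_ ∧ _))

theorem altParity_cons {p a : ℕ} {l : List ℕ} :
    AltParity p (a :: l) ↔ a % 2 = p % 2 ∧ AltParity (p + 1) l := by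
  rcases l with _ | ⟨b, l⟩
  · simp [AltParity]
  · simp only [AltParity, List.isChain_cons_cons, List.head?_cons, Option.mem_def,
      Option.some.injEq, forall_eq']
    constructor
    · rintro ⟨⟨hab, hl⟩, ha⟩
      exact ⟨ha, hl, by omega⟩
    · rintro ⟨ha, hl, hb⟩
      exact ⟨⟨by omega, hl⟩, ha⟩

theorem altParity_append_singleton {p m : ℕ} {l : List ℕ} :
    AltParity p (l ++ [m]) ↔ AltParity p l ∧ m % 2 = (l.length + p) % 2 := by
  induction l generalizing p with
  | nil => simp [AltParity]
  | cons a l ih =>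
    rw [List.cons_append, altParity_cons, altParity_cons, ih, List.length_cons,
      Nat.add_right_comm, ← add_assoc, and_assoc]

theorem Finset.sort_insert_of_forall_lt {α : Type*} [LinearOrder α] {s : Finset α} {m : α}
    (h : ∀ b ∈ s, b < m) : (insert m s).sort (· ≤ ·) = s.sort (· ≤ ·) ++ [m] := by
  have hm : m ∉ s := fun hm => lt_irrefl m (h m hm)
  have key := (List.toFinset_sort (· ≤ ·) (l := s.sort (· ≤ ·) ++ [m]) ?_).2 ?_
  · have hset : (s.sort (· ≤ ·) ++ [m]).toFinset = insert m s := by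
      ext; simp
    rwa [hset] at key
  · simp [List.nodup_append, Finset.sort_nodup, hm]
  · simp only [List.pairwise_append, Finset.pairwise_sort, List.pairwise_singleton, true_and,
      Finset.mem_sort, List.mem_singleton]
    rintro a ha b rfl
    exact (h a ha).le

section

variable {R : Type*} [CommRing R] (c : ℕ → R)

theorem oddAltSum_eq_sum_powerset (n k : ℕ) :
    oddAltSum c n k = ∑ s ∈ (Icc 1 n).powerset,
      if s.card = k ∧ AltParity 1 (s.sort (· ≤ ·)) then ∏ i ∈ s, c i else 0 := by
  rw [oddAltSum]
  split_ifs with hk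
  · subst hk
    rw [sum_eq_single_of_mem ∅ (empty_mem_powerset _)
      (fun s _ hs => if_neg fun h => hs (card_eq_zero.1 h.1))]
    simp [AltParity]
  · rw [powersetCard_eq_filter, filter_filter, sum_filter]
    rfl

theorem oddAltSum_succ_succ (n k : ℕ) :
    oddAltSum c (n + 1) (k + 1) =
      oddAltSum c n (k + 1) + if n % 2 = k % 2 then c (n + 1) * oddAltSum c n k else 0 := by
  have hn : n + 1 ∉ Icc 1 n := by simp
  simp only [oddAltSum_eq_sum_powerset, ← insert_Icc_right_eq_Icc_add_one (by omega : 1 ≤ n + 1),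
    sum_powerset_insert hn]
  congr 1
  have hins : ∀ s ∈ (Icc 1 n).powerset,
      (if (insert (n + 1) s).card = k + 1 ∧ AltParity 1 ((insert (n + 1) s).sort (· ≤ ·))
        then ∏ i ∈ insert (n + 1) s, c i else 0) =
      if n % 2 = k % 2 then c (n + 1) * if s.card = k ∧ AltParity 1 (s.sort (· ≤ ·))
        then ∏ i ∈ s, c i else 0 else 0 := by
    intro s hs
    have hlt : ∀ b ∈ s, b < n + 1 := fun b hb => by
      have := mem_Icc.1 (mem_powerset.1 hs hb); omega
    have hs' : n + 1 ∉ s := fun h => lt_irrefl _ (hlt _ h)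
    have hpar : (n + 1) % 2 = (s.card + 1) % 2 ↔ n % 2 = s.card % 2 := by omega
    simp only [card_insert_of_notMem hs', Finset.sort_insert_of_forall_lt hlt,
      altParity_append_singleton, prod_insert hs', length_sort, hpar, add_left_inj]
    by_cases hcard : s.card = k
    · subst hcard
      split_ifs <;> simp_all
    · simp [hcard]
  rw [sum_congr rfl hins]
  split_ifs <;> simp [mul_sum]

theorem oddAltSum_zero_right (n : ℕ) : oddAltSum c n 0 = 1 := if_pos rfl

theorem oddAltSum_eq_zero_of_lt {n k : ℕ} (h : n < k) : oddAltSum c n k = 0 := by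
  rw [oddAltSum_eq_sum_powerset]
  refine sum_eq_zero fun s hs => if_neg fun hk => ?_
  have := card_le_card (mem_powerset.1 hs)
  simp only [Nat.card_Icc, hk.1] at this
  omega

theorem oddAltSum_add_two {n j : ℕ} (h : (n + j) % 2 = 1) :
    oddAltSum c (n + 2) (j + 1) = oddAltSum c n (j + 1) + c (n + 2) * oddAltSum c (n + 1) j := by
  rw [oddAltSum_succ_succ, oddAltSum_succ_succ, if_neg (by omega), if_pos (by omega), add_zero]

def altSumEven (m : ℕ) : R :=
  ∑ k ∈ range (m + 1), (-1) ^ k * oddAltSum c (2 * m) (2 * k)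

def altSumOdd (m : ℕ) : R :=
  ∑ k ∈ range (m + 1), (-1) ^ k * oddAltSum c (2 * m + 1) (2 * k + 1)

theorem altSumEven_zero : altSumEven c 0 = 1 := by
  simp [altSumEven, oddAltSum_zero_right]

theorem altSumOdd_zero : altSumOdd c 0 = c 1 := by
  have h11 : oddAltSum c 1 1 = c 1 := by
    simpa [oddAltSum_eq_zero_of_lt c zero_lt_one, oddAltSum_zero_right] using
      oddAltSum_succ_succ c 0 0
  simp [altSumOdd, h11]

theorem altSumEven_succ (m : ℕ) :
    altSumEven c (m + 1) = altSumEven c m - c (2 * m + 2) * altSumOdd c m := by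
  have hshift : ∀ n, ∑ k ∈ range (m + 2), (-1 : R) ^ k * oddAltSum c n (2 * k) =
      1 + ∑ k ∈ range (m + 1), (-1) ^ (k + 1) * oddAltSum c n (2 * k + 2) := fun n => by
    rw [sum_range_succ', add_comm]
    simp [oddAltSum_zero_right, mul_add]
  have hlong : altSumEven c m =
      ∑ k ∈ range (m + 2), (-1 : R) ^ k * oddAltSum c (2 * m) (2 * k) := by
    rw [sum_range_succ, oddAltSum_eq_zero_of_lt c (by omega), mul_zero, add_zero, altSumEven]
  rw [altSumEven, show 2 * (m + 1) = 2 * m + 2 by ring, hshift, hlong, hshift, altSumOdd, mul_sum,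
    add_sub_assoc, ← sum_sub_distrib]
  refine congrArg _ (sum_congr rfl fun k _ => ?_)
  rw [oddAltSum_add_two c (by omega : (2 * m + (2 * k + 1)) % 2 = 1)]
  ring

theorem altSumOdd_succ (m : ℕ) :
    altSumOdd c (m + 1) = altSumOdd c m + c (2 * m + 3) * altSumEven c (m + 1) := by
  have hlong : altSumOdd c m =
      ∑ k ∈ range (m + 2), (-1 : R) ^ k * oddAltSum c (2 * m + 1) (2 * k + 1) := by
    rw [sum_range_succ, oddAltSum_eq_zero_of_lt c (by omega), mul_zero, add_zero, altSumOdd]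
  rw [altSumOdd, altSumEven, hlong, mul_sum, ← sum_add_distrib]
  refine sum_congr rfl fun k _ => ?_
  rw [show 2 * (m + 1) + 1 = 2 * m + 1 + 2 by ring, show 2 * (m + 1) = 2 * m + 1 + 1 by ring,
    oddAltSum_add_two c (by omega : (2 * m + 1 + 2 * k) % 2 = 1)]
  ring

end

theorem eq_altSumEven_and_altSumOdd {R : Type*} [CommRing R] {c a : ℕ → R}
    (h0 : a 0 = 0) (h1 : a 1 = 1)
    (hrec : ∀ n, 2 ≤ n → a n = -a (n - 2) - c (n - 1) * a (n - 1)) (m : ℕ) :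
    a (2 * m + 1) = (-1) ^ m * altSumEven c m ∧
      a (2 * m + 2) = (-1) ^ (m + 1) * altSumOdd c m := by
  induction m with
  | zero =>
    have h2 : a 2 = -c 1 := by simp [hrec 2 le_rfl, h0, h1]
    simp [altSumEven_zero, altSumOdd_zero, h1, h2]
  | succ m ih =>
    have hodd : a (2 * m + 3) = (-1) ^ (m + 1) * altSumEven c (m + 1) := by
      rw [hrec _ (by omega), show 2 * m + 3 - 2 = 2 * m + 1 by omega,
        show 2 * m + 3 - 1 = 2 * m + 2 by omega, ih.1, ih.2, altSumEven_succ]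
      ring
    refine ⟨hodd, ?_⟩
    rw [hrec _ (by omega), show 2 * (m + 1) + 2 - 2 = 2 * m + 2 by omega,
      show 2 * (m + 1) + 2 - 1 = 2 * m + 3 by omega, hodd, ih.2, altSumOdd_succ]
    ring

/-- Explicit description of the sequence `a₀ = 0`, `a₁ = 1`,
`a_n = −a_{n−2} − c_{n−1} a_{n−1}`:
(a) `a_{2r} = (−1)^r Σ_{k=0}^{r−1} (−1)^k t^{(2r−1)}_{2k+1,odd}` and
(b) `a_{2r−1} = (−1)^{r−1} Σ_{k=0}^{r−1} (−1)^k t^{(2r−2)}_{2k,odd}`. -/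
theorem stmt19 (R : Type*) [CommRing R] (c : ℕ → R) (a : ℕ → R)
    (h0 : a 0 = 0) (h1 : a 1 = 1)
    (hrec : ∀ n, 2 ≤ n → a n = -a (n - 2) - c (n - 1) * a (n - 1)) :
    ∀ r, 1 ≤ r →
      a (2 * r) = (-1 : R) ^ r *
        ∑ k ∈ Finset.range r, (-1 : R) ^ k * oddAltSum c (2 * r - 1) (2 * k + 1) ∧
      a (2 * r - 1) = (-1 : R) ^ (r - 1) *
        ∑ k ∈ Finset.range r, (-1 : R) ^ k * oddAltSum c (2 * r - 2) (2 * k) := by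
  intro r hr
  obtain ⟨m, rfl⟩ := Nat.exists_eq_add_of_le' hr
  obtain ⟨hodd, heven⟩ := eq_altSumEven_and_altSumOdd h0 h1 hrec m
  rw [show 2 * (m + 1) - 1 = 2 * m + 1 by omega, show 2 * (m + 1) - 2 = 2 * m by omega,
    Nat.add_sub_cancel]
  exact ⟨heven, hodd⟩
end
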